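/- For all ℓ ∈ {1,…,M} and i, j, k ∈ {0,…,N−1}, the sequence of vertices u_0, u_1, …, u_i, x_ℓ, v_j, v_{j−1}, …, v_0, w_k, w_{k+1}, …, w_{N−1} is a path in the max-plus gadget graph H with hop count exactly (N+2) + (i + j − k) and total weight 15W − a_ℓ[i] − b_ℓ[j] + c[k]. -/

import Mathlib

/-- Vertex set of the max-plus gadget graph: `U ⊕ V ⊕ W ⊕ X`. -/
abbrev MPVert (N M : ℕ) := (Fin N ⊕ Fin N) ⊕ (Fin N ⊕ Fin M)

/-- Vertex `u_i`. -/
def vu (N M : ℕ) (i : Fin N) : MPVert N M := Sum.inl (Sum.inl i)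
/-- Vertex `v_j`. -/
def vv (N M : ℕ) (j : Fin N) : MPVert N M := Sum.inl (Sum.inr j)
/-- Vertex `w_k`. -/
def vw (N M : ℕ) (k : Fin N) : MPVert N M := Sum.inr (Sum.inl k)
/-- Vertex `x_ℓ`. -/
def vx (N M : ℕ) (l : Fin M) : MPVert N M := Sum.inr (Sum.inr l)

/-- Adjacency (as a `Bool`) of the max-plus gadget graph. -/
def mpAdjB (N M : ℕ) : MPVert N M → MPVert N M → Bool
  | Sum.inl (Sum.inl i), Sum.inl (Sum.inl i') => i.val + 1 == i'.val || i'.val + 1 == i.val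
  | Sum.inl (Sum.inr j), Sum.inl (Sum.inr j') => j.val + 1 == j'.val || j'.val + 1 == j.val
  | Sum.inr (Sum.inl k), Sum.inr (Sum.inl k') => k.val + 1 == k'.val || k'.val + 1 == k.val
  | Sum.inl (Sum.inl _), Sum.inr (Sum.inr _) => true
  | Sum.inr (Sum.inr _), Sum.inl (Sum.inl _) => true
  | Sum.inr (Sum.inr _), Sum.inl (Sum.inr _) => true
  | Sum.inl (Sum.inr _), Sum.inr (Sum.inr _) => true
  | Sum.inl (Sum.inr j), Sum.inr (Sum.inl _) => j.val == 0
  | Sum.inr (Sum.inl _), Sum.inl (Sum.inr j) => j.val == 0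
  | _, _ => false

/-- The max-plus gadget graph. -/
def mpGraph (N M : ℕ) : SimpleGraph (MPVert N M) where
  Adj x y := mpAdjB N M x y = true
  symm := by
    constructor
    rintro ((i | j) | (k | l)) ((i' | j') | (k' | l')) h <;>
      simp_all [mpAdjB] <;> omega
  loopless := by
    constructor
    rintro ((i | j) | (k | l)) h <;> simp_all [mpAdjB]

/-- The edge weights of the max-plus gadget graph. -/
def mpW (N M : ℕ) (W : ℤ) (a b : Fin M → Fin N → ℤ) (c : Fin N → ℤ) :
    MPVert N M → MPVert N M → ℤ
  | Sum.inl (Sum.inl i), Sum.inr (Sum.inr l) => 5 * W - a l i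
  | Sum.inr (Sum.inr l), Sum.inl (Sum.inl i) => 5 * W - a l i
  | Sum.inr (Sum.inr l), Sum.inl (Sum.inr j) => 5 * W - b l j
  | Sum.inl (Sum.inr j), Sum.inr (Sum.inr l) => 5 * W - b l j
  | Sum.inl (Sum.inr _), Sum.inr (Sum.inl k) => 5 * W + c k
  | Sum.inr (Sum.inl k), Sum.inl (Sum.inr _) => 5 * W + c k
  | _, _ => 0

/-- The total weight of a walk: the sum of the weights of its edges, with multiplicity. -/
def walkWeight {V : Type*} {G : SimpleGraph V} (w : V → V → ℤ) {s t : V}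
    (p : G.Walk s t) : ℤ :=
  (p.darts.map fun d => w d.toProd.1 d.toProd.2).sum


/-!
The path runs monotonically through the blocks `u`, `v`, `w`, joined by the edges `u_i x_ℓ`,
`x_ℓ v_j` and `v_0 w_k`. Edges inside a block weigh `0`, so the total weight is that of the three
connecting edges, `(5W - a_ℓ[i]) + (5W - b_ℓ[j]) + (5W + c[k])`.
-/

namespace SimpleGraph.Walk

variable {V : Type*} {G : SimpleGraph V}

theorem exists_support_eq {l : List V} {u v : V} (hl : l.IsChain G.Adj)
    (hu : l.head? = some u) (hv : l.getLast? = some v) : ∃ p : G.Walk u v, p.support = l := by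
  have hne : l ≠ [] := by rintro rfl; simp at hu
  rw [List.head?_eq_some_head hne, Option.some_inj] at hu
  rw [List.getLast?_eq_some_getLast hne, Option.some_inj] at hv
  exact ⟨(ofSupport l hne hl).copy hu hv, by simp⟩

end SimpleGraph.Walk

section walkWeight

variable {V : Type*} {G : SimpleGraph V} (w : V → V → ℤ)

@[simp]
lemma walkWeight_cons {u v x : V} (h : G.Adj u v) (p : G.Walk v x) :
    walkWeight w (.cons h p) = w u v + walkWeight w p := by
  simp [walkWeight]

@[simp]
lemma walkWeight_append {u v x : V} (p : G.Walk u v) (q : G.Walk v x) :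
    walkWeight w (p.append q) = walkWeight w p + walkWeight w q := by
  simp [walkWeight]

lemma walkWeight_eq_zero_of_support_eq_map {α : Type*} {f : α → V}
    (hw : ∀ x y, w (f x) (f y) = 0) {l : List α} {u v : V} {p : G.Walk u v}
    (hp : p.support = l.map f) : walkWeight w p = 0 := by
  have hrange : ∀ x ∈ p.support, ∃ y, f y = x := by
    simp only [hp, List.mem_map]
    rintro _ ⟨y, -, rfl⟩
    exact ⟨y, rfl⟩
  refine List.sum_eq_zero fun _ hx => ?_
  obtain ⟨d, hd, rfl⟩ := List.mem_map.mp hx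
  obtain ⟨x, hx⟩ := hrange _ (p.dart_fst_mem_support_of_mem_darts hd)
  obtain ⟨y, hy⟩ := hrange _ (p.dart_snd_mem_support_of_mem_darts hd)
  rw [← hx, ← hy]
  exact hw x y

end walkWeight

lemma List.isChain_finRange (n : ℕ) :
    (List.finRange n).IsChain fun x y : Fin n => x.val + 1 = y.val := by
  simp [List.isChain_iff_getElem]

section gadget

variable {N M : ℕ}

lemma mpGraph_adj_vu_vx (i : Fin N) (l : Fin M) : (mpGraph N M).Adj (vu N M i) (vx N M l) :=
  rfl

lemma mpGraph_adj_vx_vv (l : Fin M) (j : Fin N) : (mpGraph N M).Adj (vx N M l) (vv N M j) :=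
  rfl

lemma mpGraph_adj_vv_zero_vw (hN : 0 < N) (k : Fin N) :
    (mpGraph N M).Adj (vv N M ⟨0, hN⟩) (vw N M k) :=
  rfl

lemma isChain_map_vu_take (n : ℕ) :
    (((List.finRange N).take n).map (vu N M)).IsChain (mpGraph N M).Adj := by
  refine List.isChain_map_of_isChain _ (fun x y h => ?_) ((List.isChain_finRange N).take n)
  simp [mpGraph, mpAdjB, vu, h]

lemma isChain_map_vv_reverse_take (n : ℕ) :
    (((List.finRange N).take n).reverse.map (vv N M)).IsChain (mpGraph N M).Adj := by
  refine List.isChain_map_of_isChain _ (fun x y h => ?_)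
    (List.isChain_reverse.mpr ((List.isChain_finRange N).take n))
  simp [mpGraph, mpAdjB, vv, h]

lemma isChain_map_vw_drop (n : ℕ) :
    (((List.finRange N).drop n).map (vw N M)).IsChain (mpGraph N M).Adj := by
  refine List.isChain_map_of_isChain _ (fun x y h => ?_) ((List.isChain_finRange N).drop n)
  simp [mpGraph, mpAdjB, vw, h]

lemma nodup_blocks_vu_vx_vv_vw (l : Fin M) (i j k : ℕ) :
    (((List.finRange N).take i).map (vu N M) ++ [vx N M l] ++
      ((List.finRange N).take j).reverse.map (vv N M) ++
      ((List.finRange N).drop k).map (vw N M)).Nodup := by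
  have hfin := List.nodup_finRange N
  have hU := (hfin.sublist (List.take_sublist i _)).map (f := vu N M)
    (Sum.inl_injective.comp Sum.inl_injective)
  have hV := (List.nodup_reverse.mpr (hfin.sublist (List.take_sublist j _))).map (f := vv N M)
    (Sum.inl_injective.comp Sum.inr_injective)
  have hW := (hfin.sublist (List.drop_sublist k _)).map (f := vw N M)
    (Sum.inr_injective.comp Sum.inl_injective)
  simp only [List.nodup_append, List.nodup_singleton, hU, hV, hW, List.mem_append,
    List.mem_singleton, List.mem_map, true_and]
  grind [vu, vv, vw, vx]

variable (W : ℤ) (a b : Fin M → Fin N → ℤ) (c : Fin N → ℤ)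

lemma exists_walk_along_vu (i : Fin N) :
    ∃ p : (mpGraph N M).Walk (vu N M ⟨0, i.pos⟩) (vu N M i),
      p.support = ((List.finRange N).take (i.val + 1)).map (vu N M) ∧
      walkWeight (mpW N M W a b c) p = 0 := by
  obtain ⟨p, hp⟩ := SimpleGraph.Walk.exists_support_eq
    (u := vu N M ⟨0, i.pos⟩) (v := vu N M i) (isChain_map_vu_take (i.val + 1))
    (by simp [List.head?_eq_getElem?]) (by simp [List.getLast?_eq_getElem?])
  exact ⟨p, hp, walkWeight_eq_zero_of_support_eq_map _ (fun _ _ => rfl) hp⟩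

lemma exists_walk_along_vv (j : Fin N) :
    ∃ p : (mpGraph N M).Walk (vv N M j) (vv N M ⟨0, j.pos⟩),
      p.support = ((List.finRange N).take (j.val + 1)).reverse.map (vv N M) ∧
      walkWeight (mpW N M W a b c) p = 0 := by
  obtain ⟨p, hp⟩ := SimpleGraph.Walk.exists_support_eq
    (u := vv N M j) (v := vv N M ⟨0, j.pos⟩) (isChain_map_vv_reverse_take (j.val + 1))
    (by simp [List.getLast?_eq_getElem?]) (by simp [List.head?_eq_getElem?])
  exact ⟨p, hp, walkWeight_eq_zero_of_support_eq_map _ (fun _ _ => rfl) hp⟩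

lemma exists_walk_along_vw (k : Fin N) :
    ∃ p : (mpGraph N M).Walk (vw N M k) (vw N M ⟨N - 1, Nat.sub_one_lt_of_lt k.isLt⟩),
      p.support = ((List.finRange N).drop k.val).map (vw N M) ∧
      walkWeight (mpW N M W a b c) p = 0 := by
  obtain ⟨p, hp⟩ := SimpleGraph.Walk.exists_support_eq
    (u := vw N M k) (v := vw N M ⟨N - 1, Nat.sub_one_lt_of_lt k.isLt⟩)
    (isChain_map_vw_drop k.val)
    (by simp [List.head?_eq_getElem?]) (by simp [List.getLast?_eq_getElem?]; congr 2; omega)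
  exact ⟨p, hp, walkWeight_eq_zero_of_support_eq_map _ (fun _ _ => rfl) hp⟩

end gadget

/-- For all `ℓ` and `i, j, k`, the vertex sequence
`u_0, …, u_i, x_ℓ, v_j, v_{j−1}, …, v_0, w_k, …, w_{N−1}` is a path in the max-plus
gadget graph with exactly `(N+2) + (i + j − k)` hops and total weight
`15W − a_ℓ[i] − b_ℓ[j] + c[k]`. -/
theorem stmt9 (N M : ℕ) (hN : 1 ≤ N) (W : ℤ)
    (a b : Fin M → Fin N → ℤ) (c : Fin N → ℤ)
    (l : Fin M) (i j k : Fin N) :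
    ∃ p : (mpGraph N M).Walk (vu N M ⟨0, by omega⟩) (vw N M ⟨N - 1, by omega⟩),
      p.IsPath ∧
      p.support = ((List.finRange N).take (i.val + 1)).map (vu N M) ++ [vx N M l] ++
          (((List.finRange N).take (j.val + 1)).reverse).map (vv N M) ++
          ((List.finRange N).drop k.val).map (vw N M) ∧
      (p.length : ℤ) = ((N : ℤ) + 2) + ((i.val : ℤ) + (j.val : ℤ) - (k.val : ℤ)) ∧
      walkWeight (mpW N M W a b c) p = 15 * W - a l i - b l j + c k := by
  obtain ⟨pU, hpU, hwU⟩ := exists_walk_along_vu (M := M) W a b c i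
  obtain ⟨pV, hpV, hwV⟩ := exists_walk_along_vv (M := M) W a b c j
  obtain ⟨pW, hpW, hwW⟩ := exists_walk_along_vw (M := M) W a b c k
  let p := pU.append (.cons (mpGraph_adj_vu_vx i l)
    (.cons (mpGraph_adj_vx_vv l j) (pV.append (.cons (mpGraph_adj_vv_zero_vw j.pos k) pW))))
  have hsupp : p.support = ((List.finRange N).take (i.val + 1)).map (vu N M) ++ [vx N M l] ++
      (((List.finRange N).take (j.val + 1)).reverse).map (vv N M) ++
      ((List.finRange N).drop k.val).map (vw N M) := by
    simp only [p, SimpleGraph.Walk.support_append, SimpleGraph.Walk.support_cons, hpU, hpV, hpW,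
      List.tail_cons, List.append_assoc, List.cons_append, List.nil_append]
  refine ⟨p, ?_, hsupp, ?_, ?_⟩
  · rw [SimpleGraph.Walk.isPath_def, hsupp]
    exact nodup_blocks_vu_vx_vv_vw l _ _ _
  · have hlen := p.length_support
    simp only [hsupp, List.length_append, List.length_map, List.length_take, List.length_reverse,
      List.length_drop, List.length_finRange, List.length_singleton] at hlen
    omega
  · simp only [p, walkWeight_append, walkWeight_cons, hwU, hwV, hwW]
    simp only [mpW, vu, vv, vw, vx]
    ring
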